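/- Martin-Löf random sequences satisfy the strong law of large numbers: for every Martin-Löf random A ∈ 2^ω, lim_{n→∞} (#{i < n : A(i) = 1})/n = 1/2. -/

import Mathlib

open scoped ENNReal NNReal Classical

namespace AR

/-- Elements of Cantor space `2^ω`: infinite binary sequences. -/
abbrev Seq := ℕ → Bool

/-- Finite binary strings `2^{<ω}`. -/
abbrev Str := List Bool

/-- The first `n` bits of a sequence `A`, as a finite string (`A↾n`). -/
def pre (A : Seq) (n : ℕ) : Str := List.ofFn fun i : Fin n => A i

/-- The basic clopen cylinder `[σ]` of all sequences extending `σ`. -/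
def cyl (σ : Str) : Set Seq := {A | pre A σ.length = σ}

/-- A measure on Cantor space is *fair-coin* if every cylinder `[σ]` has measure
`2^{-|σ|}`; this uniquely characterizes the usual product measure `μ` on `2^ω`. -/
def FairCoin (μ : MeasureTheory.Measure Seq) : Prop :=
  ∀ σ : Str, μ (cyl σ) = (2 : ℝ≥0∞)⁻¹ ^ σ.length

/-- A machine is a partial computable function `2^{<ω} ⇀ 2^{<ω}`. -/
def IsMachine (M : Str →. Str) : Prop := Partrec M

/-- Kolmogorov complexity of `τ` relative to the machine `M`:
`C_M(τ) = min{|σ| : M(σ)↓ = τ}`, with value `∞` if no such `σ` exists. -/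
noncomputable def Cplx (M : Str →. Str) (τ : Str) : ℕ∞ :=
  sInf ((fun σ : Str => (σ.length : ℕ∞)) '' {σ | τ ∈ M σ})

/-- A universal machine: a machine simulating every machine up to an additive
constant.  `Cplx U` for universal `U` is plain Kolmogorov complexity `C`. -/
def UniversalMachine (U : Str →. Str) : Prop :=
  IsMachine U ∧ ∀ M : Str →. Str, IsMachine M → ∃ c : ℕ, ∀ τ, Cplx U τ ≤ Cplx M τ + c

/-- A set of strings is prefix-free if none of its elements is a proper initial
segment of another. -/
def PrefixFree (S : Set Str) : Prop :=
  ∀ σ ∈ S, ∀ τ ∈ S, σ <+: τ → σ = τ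

/-- A prefix-free machine: a machine whose domain is prefix-free. -/
def PrefixFreeMachine (M : Str →. Str) : Prop :=
  IsMachine M ∧ PrefixFree {σ | (M σ).Dom}

/-- A universal prefix-free machine.  `Cplx U` for such `U` is prefix-free
Kolmogorov complexity `K`. -/
def UniversalPFMachine (U : Str →. Str) : Prop :=
  PrefixFreeMachine U ∧
    ∀ M : Str →. Str, PrefixFreeMachine M → ∃ c : ℕ, ∀ τ, Cplx U τ ≤ Cplx M τ + c

/-- A c.e. (recursively enumerable) predicate. -/
def CEPred {α} [Primcodable α] (p : α → Prop) : Prop :=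
  Partrec fun a => Part.assert (p a) fun _ => Part.some ()

/-- A Martin-Löf test: a sequence of uniformly Σ⁰₁ classes `U i`, given by a single
c.e. set `W` of pairs, with `μ (U i) ≤ 2^{-i}`. -/
def MLTest (μ : MeasureTheory.Measure Seq) (U : ℕ → Set Seq) : Prop :=
  ∃ W : Set (ℕ × Str), CEPred (· ∈ W) ∧
    (∀ i, U i = ⋃ σ ∈ {σ : Str | (i, σ) ∈ W}, cyl σ) ∧
    ∀ i, μ (U i) ≤ (2 : ℝ≥0∞)⁻¹ ^ i

/-- `A` is Martin-Löf random if it passes every Martin-Löf test. -/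
def MLRandom (μ : MeasureTheory.Measure Seq) (A : Seq) : Prop :=
  ∀ U : ℕ → Set Seq, MLTest μ U → A ∉ ⋂ i, U i

/-! For `k > 0` call a string `σ` deviant if `|σ| ≤ k · |2 · #ones(σ) - |σ||`. The fourth moment
of the `±1` sum over the strings of length `n` is `(3n² - 2n) 2ⁿ`, so by Markov's inequality at
most `3k⁴ 2ⁿ / n²` of them are deviant, a set of measure at most `3k⁴ / n²`. Summing over the
lengths `n > 3k⁴ 2ⁱ` gives measure at most `2⁻ⁱ`, so the deviant strings longer than `3k⁴ 2ⁱ`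
form a Martin-Löf test. A random `A` escapes one of its levels, hence
`|2 · #ones(A↾n) - n| < n / k` for all large `n`; as `k` is arbitrary, the frequency of ones
tends to `1 / 2`. -/

open Finset MeasureTheory Filter Topology

lemma sum_fin_succ_pi {β M : Type*} [Fintype β] [AddCommMonoid M] {n : ℕ}
    (g : (Fin (n + 1) → β) → M) :
    ∑ h, g h = ∑ f : Fin n → β, ∑ b, g (Fin.cons b f) := by
  rw [← (Fin.consEquiv fun _ => β).sum_comp, Fintype.sum_prod_type_right]
  rfl

def spinSum (σ : Str) : ℤ := (σ.map fun b => bif b then (1 : ℤ) else -1).sum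

@[simp] lemma spinSum_nil : spinSum [] = 0 := rfl

@[simp] lemma spinSum_cons (b : Bool) (σ : Str) :
    spinSum (b :: σ) = (bif b then 1 else -1) + spinSum σ := by
  simp [spinSum]

lemma spinSum_eq (σ : Str) : spinSum σ = 2 * σ.count true - σ.length := by
  induction σ with
  | nil => rfl
  | cons b σ ih => cases b <;> simp [ih] <;> ring

lemma sum_spinSum_sq (n : ℕ) :
    ∑ f : Fin n → Bool, spinSum (List.ofFn f) ^ 2 = n * 2 ^ n := by
  induction n with
  | zero => simp
  | succ n ih =>
    have step (x : ℤ) : (1 + x) ^ 2 + (-1 + x) ^ 2 = 2 * x ^ 2 + 2 := by ring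
    simp only [sum_fin_succ_pi, Fintype.sum_bool, List.ofFn_cons, spinSum_cons, cond_true,
      cond_false, step, sum_add_distrib, ← mul_sum, ih, sum_const, card_univ, Fintype.card_pi,
      Fintype.card_bool, prod_const, Fintype.card_fin]
    push_cast
    ring

lemma sum_spinSum_pow_four (n : ℕ) :
    ∑ f : Fin n → Bool, spinSum (List.ofFn f) ^ 4 = (3 * n ^ 2 - 2 * n) * 2 ^ n := by
  induction n with
  | zero => simp
  | succ n ih =>
    have step (x : ℤ) : (1 + x) ^ 4 + (-1 + x) ^ 4 = 2 * x ^ 4 + 12 * x ^ 2 + 2 := by ring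
    simp only [sum_fin_succ_pi, Fintype.sum_bool, List.ofFn_cons, spinSum_cons, cond_true,
      cond_false, step, sum_add_distrib, ← mul_sum, ih, sum_spinSum_sq, sum_const, card_univ,
      Fintype.card_pi, Fintype.card_bool, prod_const, Fintype.card_fin]
    push_cast
    ring

def deviation (σ : Str) : ℕ := Nat.dist (2 * σ.count true) σ.length

lemma natCast_deviation (σ : Str) : (deviation σ : ℤ) = |spinSum σ| := by
  rw [deviation, spinSum_eq, Nat.dist, abs_eq_max_neg]
  omega

lemma card_deviant_mul_sq_le {n : ℕ} (hn : 0 < n) (k : ℕ) :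
    #{f : Fin n → Bool | n ≤ k * deviation (List.ofFn f)} * n ^ 2 ≤ 3 * k ^ 4 * 2 ^ n := by
  set S := ({f : Fin n → Bool | n ≤ k * deviation (List.ofFn f)} : Finset _)
  have markov : (#S * n ^ 4 : ℤ) ≤ k ^ 4 * ((3 * n ^ 2 - 2 * n) * 2 ^ n) :=
    calc (#S * n ^ 4 : ℤ) = ∑ _f ∈ S, (n : ℤ) ^ 4 := by simp
      _ ≤ ∑ f ∈ S, k ^ 4 * spinSum (List.ofFn f) ^ 4 := by
        refine sum_le_sum fun f hf => ?_
        have hdev : (n : ℤ) ≤ k * |spinSum (List.ofFn f)| := by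
          rw [← natCast_deviation]
          exact_mod_cast (mem_filter.1 hf).2
        calc (n : ℤ) ^ 4 ≤ (k * |spinSum (List.ofFn f)|) ^ 4 := by gcongr
          _ = k ^ 4 * spinSum (List.ofFn f) ^ 4 := by
            rw [mul_pow, pow_abs, abs_pow, Even.pow_abs ⟨2, rfl⟩]
      _ ≤ ∑ f, k ^ 4 * spinSum (List.ofFn f) ^ 4 :=
        sum_le_sum_of_subset_of_nonneg (subset_univ _) fun _ _ _ => by positivity
      _ = k ^ 4 * ((3 * n ^ 2 - 2 * n) * 2 ^ n) := by rw [← mul_sum, sum_spinSum_pow_four]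
  have : (#S * n ^ 2 * n ^ 2 : ℤ) ≤ 3 * k ^ 4 * 2 ^ n * n ^ 2 := by
    have : (0 : ℤ) ≤ k ^ 4 * 2 ^ n * n := by positivity
    nlinarith
  exact_mod_cast le_of_mul_le_mul_right this (by positivity)

lemma abs_count_div_length_sub_half {σ : Str} (hσ : σ ≠ []) :
    |(σ.count true : ℝ) / σ.length - 1 / 2| = deviation σ / σ.length / 2 := by
  have hdev : (deviation σ : ℝ) = |2 * (σ.count true : ℝ) - σ.length| := by
    have := natCast_deviation σ
    rw [spinSum_eq] at this
    exact_mod_cast this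
  have hlen : (0 : ℝ) < σ.length := by exact_mod_cast List.length_pos_iff.2 hσ
  rw [hdev, div_div, ← abs_of_pos (by positivity : (0 : ℝ) < σ.length * 2), ← abs_div]
  congr 1
  field_simp

lemma length_pre (A : Seq) (n : ℕ) : (pre A n).length = n := List.length_ofFn

lemma count_true_pre (A : Seq) (n : ℕ) :
    (pre A n).count true = #{i ∈ range n | A i = true} := by
  rw [← Nat.count_eq_card_filter_range]
  induction n with
  | zero => rfl
  | succ n ih =>
    rw [Nat.count_succ, ← ih, pre, List.ofFn_succ', List.concat_eq_append, List.count_append]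
    simp [pre, List.count_singleton]

lemma mem_cyl_pre (A : Seq) (n : ℕ) : A ∈ cyl (pre A n) := by
  simp only [cyl, Set.mem_ofPred_eq, length_pre]

lemma biUnion_cyl_eq (P : Str → Prop) :
    ⋃ σ ∈ {σ | P σ}, cyl σ = ⋃ n, {A | P (pre A n)} := by
  ext A
  simp only [Set.mem_iUnion, Set.mem_ofPred_eq, exists_prop]
  constructor
  · rintro ⟨σ, hσ, hA⟩
    exact ⟨σ.length, by rwa [show pre A σ.length = σ from hA]⟩
  · rintro ⟨n, hn⟩
    exact ⟨pre A n, hn, mem_cyl_pre A n⟩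

lemma measure_setOf_pre_le {μ : Measure Seq} (hμ : FairCoin μ) (P : Str → Prop)
    [DecidablePred P] (n : ℕ) :
    μ {A | P (pre A n)} ≤ #{f : Fin n → Bool | P (List.ofFn f)} * 2⁻¹ ^ n :=
  calc μ {A | P (pre A n)}
      ≤ μ (⋃ f ∈ ({f : Fin n → Bool | P (List.ofFn f)} : Finset _), cyl (List.ofFn f)) :=
        measure_mono fun A hA => Set.mem_biUnion (x := fun i : Fin n => A i)
          (mem_filter.2 ⟨mem_univ _, hA⟩) (mem_cyl_pre A n)
    _ ≤ ∑ f ∈ ({f : Fin n → Bool | P (List.ofFn f)} : Finset _), μ (cyl (List.ofFn f)) :=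
        measure_biUnion_finset_le _ _
    _ = #{f : Fin n → Bool | P (List.ofFn f)} * 2⁻¹ ^ n := by
        rw [sum_congr rfl fun f _ => by rw [hμ, List.length_ofFn], sum_const, nsmul_eq_mul]

lemma measure_deviant_le {μ : Measure Seq} (hμ : FairCoin μ) {n : ℕ} (hn : 0 < n) (k : ℕ) :
    μ {A | n ≤ k * deviation (pre A n)} ≤ 3 * k ^ 4 * ((n : ℝ≥0∞) ^ 2)⁻¹ := by
  refine (measure_setOf_pre_le hμ (fun σ => n ≤ k * deviation σ) n).trans ?_
  have hcard : (#{f : Fin n → Bool | n ≤ k * deviation (List.ofFn f)} * n ^ 2 : ℝ≥0∞)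
      ≤ 3 * k ^ 4 * 2 ^ n := by exact_mod_cast card_deviant_mul_sq_le hn k
  rw [← div_eq_mul_inv, ENNReal.le_div_iff_mul_le (by simp [hn.ne']) (by simp), mul_right_comm]
  refine (mul_le_mul_left hcard _).trans_eq ?_
  rw [mul_assoc, ← mul_pow, ENNReal.mul_inv_cancel two_ne_zero ENNReal.ofNat_ne_top, one_pow,
    mul_one]

lemma tsum_ite_inv_sq_le (N : ℕ) :
    ∑' n : ℕ, (if N < n then ((n : ℝ≥0∞) ^ 2)⁻¹ else 0) ≤ (N : ℝ≥0∞)⁻¹ := by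
  rcases N.eq_zero_or_pos with rfl | hN
  · simp
  refine ENNReal.tsum_le_of_sum_range_le fun m => ?_
  have hreal : ∑ n ∈ Ioc N (N + m), ((n : ℝ) ^ 2)⁻¹ ≤ (N : ℝ)⁻¹ :=
    (sum_Ioc_inv_sq_le_sub hN.ne' (by omega)).trans (sub_le_self _ (by positivity))
  calc ∑ n ∈ range m, (if N < n then ((n : ℝ≥0∞) ^ 2)⁻¹ else 0)
      = ∑ n ∈ range m with N < n, ((n : ℝ≥0∞) ^ 2)⁻¹ := (sum_filter _ _).symm
    _ ≤ ∑ n ∈ Ioc N (N + m), ((n : ℝ≥0∞) ^ 2)⁻¹ := by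
      refine sum_le_sum_of_subset fun n hn => ?_
      simp only [mem_filter, mem_range, mem_Ioc] at hn ⊢
      omega
    _ = ENNReal.ofReal (∑ n ∈ Ioc N (N + m), ((n : ℝ) ^ 2)⁻¹) := by
      rw [ENNReal.ofReal_sum_of_nonneg fun _ _ => by positivity]
      refine sum_congr rfl fun n hn => ?_
      have hn : (0 : ℝ) < n := Nat.cast_pos.2 (hN.trans (mem_Ioc.1 hn).1)
      rw [ENNReal.ofReal_inv_of_pos (by positivity), ENNReal.ofReal_pow hn.le,
        ENNReal.ofReal_natCast]
    _ ≤ (N : ℝ≥0∞)⁻¹ := by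
      rw [← ENNReal.ofReal_natCast, ← ENNReal.ofReal_inv_of_pos (by positivity)]
      exact ENNReal.ofReal_le_ofReal hreal

def deviationThreshold (k i : ℕ) : ℕ := 3 * k ^ 4 * 2 ^ i

def deviationTestSet (k : ℕ) : Set (ℕ × Str) :=
  {p | deviationThreshold k p.1 < p.2.length ∧ p.2.length ≤ k * deviation p.2}

def deviationTest (k i : ℕ) : Set Seq := ⋃ σ ∈ {σ | (i, σ) ∈ deviationTestSet k}, cyl σ

lemma deviationTest_eq (k i : ℕ) :
    deviationTest k i =
      ⋃ n, {A | deviationThreshold k i < n ∧ n ≤ k * deviation (pre A n)} := by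
  rw [deviationTest, biUnion_cyl_eq]
  simp only [deviationTestSet, Set.mem_ofPred_eq, length_pre]

lemma measure_deviationTest_le {μ : Measure Seq} (hμ : FairCoin μ) {k : ℕ} (hk : 0 < k)
    (i : ℕ) :
    μ (deviationTest k i) ≤ 2⁻¹ ^ i := by
  have hc : (3 * k ^ 4 : ℝ≥0∞) ≠ 0 := by simp [hk.ne']
  calc μ (deviationTest k i)
      ≤ ∑' n, μ {A | deviationThreshold k i < n ∧ n ≤ k * deviation (pre A n)} := by
        rw [deviationTest_eq]
        exact measure_iUnion_le _
    _ ≤ ∑' n : ℕ,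
          3 * k ^ 4 * (if deviationThreshold k i < n then ((n : ℝ≥0∞) ^ 2)⁻¹ else 0) := by
        refine ENNReal.tsum_le_tsum fun n => ?_
        split_ifs with hn
        · exact (measure_mono fun A hA => hA.2).trans (measure_deviant_le hμ (by omega) k)
        · simp [hn]
    _ ≤ 3 * k ^ 4 * (deviationThreshold k i : ℝ≥0∞)⁻¹ := by
        rw [ENNReal.tsum_mul_left]
        gcongr
        exact tsum_ite_inv_sq_le _
    _ = 2⁻¹ ^ i := by
        push_cast [deviationThreshold]
        rw [ENNReal.mul_inv (by simp) (by simp), ← mul_assoc,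
          ENNReal.mul_inv_cancel hc (by finiteness), one_mul, ENNReal.inv_pow]

lemma primrec_deviation : Primrec deviation := by
  have hcount : Primrec fun σ : Str => σ.count true :=
    (Primrec.list_length.comp (Primrec.listFilter (p := fun b : Bool => b = true)
      ⟨inferInstance, Primrec.id.of_eq fun b => by cases b <;> rfl⟩)).of_eq
      fun σ => by simp [List.count_eq_length_filter]
  have htwice : Primrec fun σ : Str => 2 * σ.count true :=
    Primrec.nat_mul.comp (Primrec.const 2) hcount
  exact Primrec.nat_add.comp (Primrec.nat_sub.comp htwice Primrec.list_length)
    (Primrec.nat_sub.comp Primrec.list_length htwice)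

lemma cePred_mem_deviationTestSet (k : ℕ) : CEPred (· ∈ deviationTestSet k) := by
  have hpow : Primrec (2 ^ · : ℕ → ℕ) :=
    (Primrec₂.unpaired'.1 Nat.Primrec.pow).comp (Primrec.const 2) Primrec.id
  have hthreshold : Primrec fun p : ℕ × Str => deviationThreshold k p.1 :=
    Primrec.nat_mul.comp (Primrec.const _) (hpow.comp Primrec.fst)
  have hlength : Primrec fun p : ℕ × Str => p.2.length := Primrec.list_length.comp Primrec.snd
  have hbound : Primrec fun p : ℕ × Str => k * deviation p.2 :=
    Primrec.nat_mul.comp (Primrec.const k) (primrec_deviation.comp Primrec.snd)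
  exact (PrimrecPred.and (Primrec.nat_lt.comp hthreshold hlength)
    (Primrec.nat_le.comp hlength hbound)).computablePred.to_re

lemma mlTest_deviationTest {μ : Measure Seq} (hμ : FairCoin μ) {k : ℕ} (hk : 0 < k) :
    MLTest μ (deviationTest k) :=
  ⟨deviationTestSet k, cePred_mem_deviationTestSet k, fun _ => rfl,
    measure_deviationTest_le hμ hk⟩

lemma MLRandom.eventually_mul_deviation_pre_lt {μ : Measure Seq} (hμ : FairCoin μ) {A : Seq}
    (hA : MLRandom μ A) {k : ℕ} (hk : 0 < k) :
    ∀ᶠ n in atTop, k * deviation (pre A n) < n := by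
  obtain ⟨i, hi⟩ : ∃ i, A ∉ deviationTest k i := by
    simpa using hA _ (mlTest_deviationTest hμ hk)
  rw [deviationTest_eq] at hi
  simp only [Set.mem_iUnion, Set.mem_ofPred_eq, not_exists, not_and, not_le] at hi
  exact (eventually_gt_atTop _).mono hi

lemma tendsto_div_of_eventually_mul_lt {d : ℕ → ℕ}
    (h : ∀ k > 0, ∀ᶠ n in atTop, k * d n < n) :
    Tendsto (fun n => (d n : ℝ) / n) atTop (𝓝 0) := by
  refine Metric.tendsto_nhds.2 fun ε hε => ?_
  obtain ⟨k, hk⟩ := exists_nat_one_div_lt hε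
  filter_upwards [h (k + 1) k.succ_pos, eventually_gt_atTop 0] with n hlt hn
  rw [Real.dist_eq, sub_zero, abs_of_nonneg (by positivity)]
  refine lt_trans ?_ hk
  rw [div_lt_div_iff₀ (by positivity) (by positivity), one_mul, mul_comm]
  exact_mod_cast hlt

/-- Martin-Löf random sequences satisfy the **strong law of large numbers**:
`lim_n (#{i < n : A(i) = 1})/n = 1/2` for every Martin-Löf random `A`. -/
theorem MLRandom_SLLN (μ : MeasureTheory.Measure Seq) (hμ : FairCoin μ)
    (A : Seq) (hA : MLRandom μ A) :
    Filter.Tendsto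
      (fun n : ℕ => (((Finset.range n).filter fun i => A i = true).card : ℝ) / n)
      Filter.atTop (nhds (1 / 2)) := by
  have hdev : Tendsto (fun n => (deviation (pre A n) : ℝ) / n) atTop (𝓝 0) :=
    tendsto_div_of_eventually_mul_lt fun k hk => hA.eventually_mul_deviation_pre_lt hμ hk
  rw [tendsto_iff_norm_sub_tendsto_zero]
  refine (zero_div (2 : ℝ) ▸ hdev.div_const 2).congr' ?_
  filter_upwards [eventually_gt_atTop 0] with n hn
  have hfreq :=
    abs_count_div_length_sub_half (List.ne_nil_of_length_pos ((length_pre A n).symm ▸ hn))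
  rw [count_true_pre, length_pre] at hfreq
  rw [Real.norm_eq_abs, hfreq]

end AR
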